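/- Let p₁, p₂ and k be positive integers and let P, Q be real polynomials satisfying P(z) − e^{−z} = O(z^{p₁+1}) and Q(z) − e^{−z} = O(z^{p₂+1}) as real z → 0. Then for every n and every real n×n matrix L, the matrix Q(−k·h·L) − (P(−h·L))^k (polynomial evaluation at matrices) has operator norm O(h^{min(p₁,p₂)+1}) as h → 0⁺. -/

import Mathlib

/-!
Put `D(z) := Q(kz) - P(z)^k`. Since `e^{-kz} = (e^{-z})^k` and
`a^k - b^k = (a - b)·∑ aⁱ b^{k-1-i}` with the sum bounded near `0`, the hypotheses give
`D(z) = O(z^{m+1})`, `m = min p₁ p₂`, as real `z → 0`. A polynomial of that size near `0` is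
divisible by `X^{m+1}`, say `D = X^{m+1} E`, and then
`Q(-khL) - P(-hL)^k = D(-hL) = (-h)^{m+1} L^{m+1} E(-hL)`, where `E(-hL)` stays bounded.
-/

open Filter Topology Asymptotics Polynomial

attribute [local instance] Matrix.linftyOpNormedAddCommGroup Matrix.linftyOpNormedRing
attribute [local instance] Matrix.linftyOpNormedAlgebra

namespace Asymptotics

theorem isBigO_pow_pow_of_le {𝕜 : Type*} [NormedDivisionRing 𝕜] {m n : ℕ} (h : m ≤ n) :
    (fun x : 𝕜 => x ^ n) =O[𝓝 0] fun x => x ^ m := by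
  rcases h.eq_or_lt with rfl | h
  · exact isBigO_refl _ _
  · exact (isLittleO_pow_pow h).isBigO

theorem IsBigO.pow_sub_pow {α R F : Type*} [NormedCommRing R] [SeminormedAddCommGroup F]
    {l : Filter α} {f g : α → R} {φ : α → F}
    (hf : f =O[l] fun _ => (1 : ℝ)) (hg : g =O[l] fun _ => (1 : ℝ))
    (h : (fun x => f x - g x) =O[l] φ) (n : ℕ) :
    (fun x => f x ^ n - g x ^ n) =O[l] φ := by
  have hsum : (fun x => ∑ i ∈ Finset.range n, f x ^ i * g x ^ (n - 1 - i))
      =O[l] fun _ => (1 : ℝ) :=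
    IsBigO.fun_sum fun i _ => by simpa using (hf.pow i).mul (hg.pow (n - 1 - i))
  exact isBigO_norm_right.mp (by simpa [geom_sum₂_mul] using hsum.mul h.norm_right)

end Asymptotics

namespace Polynomial

theorem aeval_comp_C_mul_X {R A : Type*} [CommSemiring R] [Semiring A] [Algebra R A] (Q : R[X])
    (c : R) (x : A) :
    aeval x (Q.comp (C c * X)) = aeval (c • x) Q := by
  simp [aeval_comp, Algebra.smul_def]

variable {𝕜 : Type*} [NontriviallyNormedField 𝕜]

theorem X_pow_dvd_of_isBigO {n : ℕ} {D : 𝕜[X]}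
    (hD : (fun z => D.eval z) =O[𝓝[≠] 0] fun z => z ^ n) : X ^ n ∣ D := by
  induction n generalizing D with
  | zero => exact pow_zero (X : 𝕜[X]) ▸ one_dvd D
  | succ n ih =>
    have hD0 : D.eval 0 = 0 :=
      tendsto_nhds_unique ((D.continuous.tendsto 0).mono_left nhdsWithin_le_nhds)
        (hD.trans_tendsto <| ((continuous_pow (n + 1)).tendsto' 0 0 (by simp)).mono_left
          nhdsWithin_le_nhds)
    obtain ⟨E, rfl⟩ : X ∣ D := X_dvd_iff.mpr (by rwa [coeff_zero_eq_eval_zero])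
    -- dividing `z E(z) = O(z^{n+1})` by `z` is why the estimate is only asked off `0`
    have hE : (fun z => E.eval z) =O[𝓝[≠] 0] fun z => z ^ n := by
      refine ((isBigO_refl (fun z : 𝕜 => z⁻¹) _).mul hD).congr' ?_ ?_ <;>
        filter_upwards [self_mem_nhdsWithin] with z (hz : z ≠ 0) <;>
        simp only [eval_mul, eval_X, pow_succ', inv_mul_cancel_left₀ hz]
    rw [pow_succ']
    exact mul_dvd_mul_left X (ih hE)

theorem isBigO_aeval_smul_of_X_pow_dvd {A : Type*} [NormedRing A] [NormedAlgebra 𝕜 A]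
    {n : ℕ} {D : 𝕜[X]} (hD : X ^ n ∣ D) (x : A) :
    (fun t : 𝕜 => aeval (t • x) D) =O[𝓝 0] fun t => t ^ n := by
  obtain ⟨E, rfl⟩ := hD
  have hE : (fun t : 𝕜 => x ^ n * aeval (t • x) E) =O[𝓝 0] fun _ => (1 : 𝕜) :=
    ((continuous_const.mul <| E.continuous_aeval.comp <|
      continuous_id.smul continuous_const).tendsto 0).isBigO_one 𝕜
  refine ((isBigO_refl (fun t : 𝕜 => t ^ n) _).smul hE).congr (fun t => ?_) (fun t => ?_)
  · rw [map_mul, map_pow, aeval_X, _root_.smul_pow, smul_mul_assoc]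
  · simp

end Polynomial

theorem Polynomial.isBigO_eval_comp_C_mul_X_sub_pow {p₁ p₂ : ℕ} {P Q : ℝ[X]} (k : ℕ)
    (hP : (fun z : ℝ => P.eval z - Real.exp (-z)) =O[𝓝 0] fun z : ℝ => z ^ (p₁ + 1))
    (hQ : (fun z : ℝ => Q.eval z - Real.exp (-z)) =O[𝓝 0] fun z : ℝ => z ^ (p₂ + 1)) :
    (fun z : ℝ => (Q.comp (C (k : ℝ) * X) - P ^ k).eval z)
      =O[𝓝 0] fun z : ℝ => z ^ (min p₁ p₂ + 1) := by
  have hQk : (fun z : ℝ => Q.eval (k * z) - Real.exp (-(k * z))) =O[𝓝 0]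
      fun z : ℝ => z ^ (p₂ + 1) :=
    (hQ.comp_tendsto ((continuous_const_mul (k : ℝ)).tendsto' 0 0 (mul_zero _))).trans <| by
      simpa only [Function.comp_def, mul_pow] using
        (isBigO_refl (fun z : ℝ => z ^ (p₂ + 1)) _).const_mul_left _
  have hPk : (fun z : ℝ => P.eval z ^ k - Real.exp (-z) ^ k) =O[𝓝 0]
      fun z : ℝ => z ^ (p₁ + 1) :=
    IsBigO.pow_sub_pow ((P.continuous.tendsto 0).isBigO_one ℝ)
      (((Real.continuous_exp.comp continuous_neg).tendsto 0).isBigO_one ℝ) hP k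
  refine ((hQk.trans (isBigO_pow_pow_of_le (by omega))).sub
    (hPk.trans (isBigO_pow_pow_of_le (by omega)))).congr_left fun z => ?_
  simp [← Real.exp_nat_mul, mul_neg]

theorem stmt_1_general (p₁ p₂ k : ℕ)
    (P Q : Polynomial ℝ)
    (hP : (fun z : ℝ => P.eval z - Real.exp (-z)) =O[𝓝 0] fun z : ℝ => z ^ (p₁ + 1))
    (hQ : (fun z : ℝ => Q.eval z - Real.exp (-z)) =O[𝓝 0] fun z : ℝ => z ^ (p₂ + 1)) :
    ∀ (n : ℕ) (L : Matrix (Fin n) (Fin n) ℝ),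
      (fun h : ℝ =>
          (Polynomial.aeval ((-((k : ℝ) * h)) • L)) Q -
            ((Polynomial.aeval ((-h) • L)) P) ^ k)
        =O[𝓝[>] 0] fun h : ℝ => h ^ (min p₁ p₂ + 1) := by
  intro n L
  have hdvd : X ^ (min p₁ p₂ + 1) ∣ Q.comp (C (k : ℝ) * X) - P ^ k :=
    X_pow_dvd_of_isBigO ((isBigO_eval_comp_C_mul_X_sub_pow k hP hQ).mono nhdsWithin_le_nhds)
  refine ((isBigO_aeval_smul_of_X_pow_dvd hdvd (-L)).mono nhdsWithin_le_nhds).congr_left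
    fun h => ?_
  rw [map_sub, map_pow, aeval_comp_C_mul_X, smul_smul, smul_neg, smul_neg, ← neg_smul,
    ← neg_smul]

/-- Matrix form of the paper's Lemma on `Ψ - Φ^k` for polynomial (explicit Runge-Kutta)
stability functions: if `P(z) - e^{-z} = O(z^{p₁+1})` and `Q(z) - e^{-z} = O(z^{p₂+1})`
as `z → 0`, then for every real `n × n` matrix `L`, the matrix
`Q(-k·h·L) - (P(-h·L))^k` has (operator) norm `O(h^{min(p₁,p₂)+1})` as `h → 0⁺`. -/
theorem stmt_1 (p₁ p₂ k : ℕ) (hp₁ : 0 < p₁) (hp₂ : 0 < p₂) (hk : 0 < k)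
    (P Q : Polynomial ℝ)
    (hP : (fun z : ℝ => P.eval z - Real.exp (-z)) =O[𝓝 0] fun z : ℝ => z ^ (p₁ + 1))
    (hQ : (fun z : ℝ => Q.eval z - Real.exp (-z)) =O[𝓝 0] fun z : ℝ => z ^ (p₂ + 1)) :
    ∀ (n : ℕ) (L : Matrix (Fin n) (Fin n) ℝ),
      (fun h : ℝ =>
          (Polynomial.aeval ((-((k : ℝ) * h)) • L)) Q -
            ((Polynomial.aeval ((-h) • L)) P) ^ k)
        =O[𝓝[>] 0] fun h : ℝ => h ^ (min p₁ p₂ + 1) :=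
  stmt_1_general p₁ p₂ k P Q hP hQ
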